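/- Let X have density on ℝ^d and Y_k = X + N_k, N_k ~ N(0,σ²I) i.i.d. independent of X. Then for every m ≥ 1, ∇²_{y_m} log p(y_m | y_{1:m−1}) = −σ^{−2}I + σ^{−4}·cov(X | y_{1:m}). -/

import Mathlib

open MeasureTheory Real

noncomputable section

def sqDist {d : ℕ} (x y : Fin d → ℝ) : ℝ := ∑ i, (x i - y i) ^ 2

/-- Density of the isotropic Gaussian `N(x, σ² I)` evaluated at `y`. -/
def gKer (d : ℕ) (σ : ℝ) (x y : Fin d → ℝ) : ℝ :=
  (2 * π * σ ^ 2) ^ (-(d : ℝ) / 2) * Real.exp (-sqDist x y / (2 * σ ^ 2))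

def hess' {d : ℕ} (g : (Fin d → ℝ) → ℝ) (y : Fin d → ℝ) : Matrix (Fin d) (Fin d) ℝ :=
  Matrix.of fun i j => fderiv ℝ (fun z => fderiv ℝ g z (Pi.single j 1)) y (Pi.single i 1)

/-- Joint density of `n` noisy measurements `Y_k = X + N_k`, `N_k ~ N(0, σ²I)`, where `X`
has density `p`. -/
def jointD {d : ℕ} (p : (Fin d → ℝ) → ℝ) (σ : ℝ) (n : ℕ) (y : Fin n → Fin d → ℝ) : ℝ :=
  ∫ x : Fin d → ℝ, p x * ∏ k, gKer d σ x (y k)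

/-- Posterior covariance of `X` given all `n` measurements. -/
def postCovM {d : ℕ} (p : (Fin d → ℝ) → ℝ) (σ : ℝ) (n : ℕ) (y : Fin n → Fin d → ℝ) :
    Matrix (Fin d) (Fin d) ℝ :=
  Matrix.of fun i j =>
    (∫ x, x i * x j * (p x * ∏ k, gKer d σ x (y k))) / jointD p σ n y
      - ((∫ x, x i * (p x * ∏ k, gKer d σ x (y k))) / jointD p σ n y)
          * ((∫ x, x j * (p x * ∏ k, gKer d σ x (y k))) / jointD p σ n y)

/-!
Put `Q x = p x ∏_{k < m} gKer x (y k)`. As a function of the newest measurement `z`, the joint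
density is the Gaussian smoothing `J z = ∫ Q x gKer x z dx`, and the denominator does not depend
on `z`. Since `∇_z gKer x z = σ⁻² (x - z) gKer x z`, differentiating under the integral sign gives
`∇ log J = σ⁻² (E[X | y] - z)`, and differentiating once more gives `σ⁻⁴ cov(X | y) - σ⁻² I`.
Differentiating under the integral needs only that `Q` and its second moments are integrable
against every Gaussian: for `z` in the cube of side `2` around `z₀`, `gKer x z` is bounded by a
fixed multiple of the sum of the kernels centred at the corners of the cube, so no smoothness of
`p` is needed.
-/

section GaussianSmoothing
variable {d : ℕ}

def dotCLM (a : Fin d → ℝ) : (Fin d → ℝ) →L[ℝ] ℝ :=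
  ∑ i, a i • ContinuousLinearMap.proj i

lemma dotCLM_apply (a v : Fin d → ℝ) : dotCLM a v = ∑ i, a i * v i := by
  simp [dotCLM]

lemma dotCLM_single (a : Fin d → ℝ) (i : Fin d) : dotCLM a (Pi.single i 1) = a i := by
  simp [dotCLM_apply, Pi.single_apply]

lemma norm_dotCLM_le (a : Fin d → ℝ) : ‖dotCLM a‖ ≤ ∑ i, |a i| := by
  refine ContinuousLinearMap.opNorm_le_bound _ (by positivity) fun v => ?_
  rw [dotCLM_apply, Finset.sum_mul]
  refine (norm_sum_le _ _).trans (Finset.sum_le_sum fun i _ => ?_)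
  rw [norm_mul, Real.norm_eq_abs]
  exact mul_le_mul_of_nonneg_left (norm_le_pi_norm v i) (abs_nonneg _)

lemma dotCLM_smul (c : ℝ) (a : Fin d → ℝ) : c • dotCLM a = dotCLM (c • a) := by
  simp [dotCLM, Finset.smul_sum, smul_smul]

section integral
variable {α : Type*} [MeasurableSpace α] {μ : Measure α} {f : Fin d → α → ℝ}

lemma integrable_dotCLM (hf : ∀ i, Integrable (f i) μ) :
    Integrable (fun x => dotCLM fun i => f i x) μ :=
  integrable_finsetSum _ (f := fun i x =>
    f i x • (ContinuousLinearMap.proj i : (Fin d → ℝ) →L[ℝ] ℝ)) fun i _ => (hf i).smul_const _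

lemma integral_dotCLM (hf : ∀ i, Integrable (f i) μ) :
    ∫ x, dotCLM (fun i => f i x) ∂μ = dotCLM fun i => ∫ x, f i x ∂μ := by
  have := integral_finsetSum (μ := μ) Finset.univ (f := fun i x =>
    f i x • (ContinuousLinearMap.proj i : (Fin d → ℝ) →L[ℝ] ℝ)) fun i _ => (hf i).smul_const _
  simp only [integral_smul_const] at this
  exact this

end integral

section gKer
variable {σ : ℝ}

lemma gKer_nonneg (x z : Fin d → ℝ) : 0 ≤ gKer d σ x z := by
  unfold gKer
  positivity

lemma gKer_eq_mul_prod (x z : Fin d → ℝ) :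
    gKer d σ x z =
      (2 * π * σ ^ 2) ^ (-(d : ℝ) / 2) * ∏ i, exp (-(x i - z i) ^ 2 / (2 * σ ^ 2)) := by
  rw [gKer, sqDist, ← Real.exp_sum, ← Finset.sum_neg_distrib, Finset.sum_div]

lemma gKer_le (x z : Fin d → ℝ) : gKer d σ x z ≤ (2 * π * σ ^ 2) ^ (-(d : ℝ) / 2) := by
  rw [gKer]
  refine mul_le_of_le_one_right (by positivity) (Real.exp_le_one_iff.mpr ?_)
  rw [neg_div]
  exact neg_nonpos.mpr (div_nonneg (Finset.sum_nonneg fun i _ => sq_nonneg _) (by positivity))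

lemma continuous_gKer_left (z : Fin d → ℝ) : Continuous fun x => gKer d σ x z := by
  unfold gKer sqDist
  fun_prop

lemma hasFDerivAt_gKer_right (x z : Fin d → ℝ) :
    HasFDerivAt (gKer d σ x) (dotCLM fun i => (σ ^ 2)⁻¹ * ((x i - z i) * gKer d σ x z)) z := by
  have hsq : HasFDerivAt (fun z => sqDist x z) (dotCLM fun i => -2 * (x i - z i)) z := by
    refine (HasFDerivAt.fun_sum fun i _ =>
      ((hasFDerivAt_apply i z).const_sub (x i)).pow 2).congr_fderiv ?_
    ext v
    simp [dotCLM_apply]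
  have hfun : gKer d σ x = fun z =>
      (2 * π * σ ^ 2) ^ (-(d : ℝ) / 2) * exp (-(2 * σ ^ 2)⁻¹ * sqDist x z) := by
    funext z
    simp only [gKer, div_eq_inv_mul, mul_neg, neg_mul]
  rw [hfun]
  refine ((hsq.const_mul _).exp.const_mul _).congr_fderiv ?_
  ext v
  simp only [dotCLM_apply, smul_apply, smul_eq_mul, Finset.mul_sum, mul_inv]
  exact Finset.sum_congr rfl fun i _ => by ring

def cubeCorner (z₀ : Fin d → ℝ) (ε : ℝ) (s : Fin d → Bool) : Fin d → ℝ :=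
  fun i => z₀ i + if s i then ε else -ε

lemma exp_neg_sq_le_of_abs_le {a t t₀ ε : ℝ} (h : |t - t₀| ≤ ε) :
    exp (-(a - t) ^ 2 / (2 * σ ^ 2)) ≤ exp (ε ^ 2 / (2 * σ ^ 2)) *
      ∑ b : Bool, exp (-(a - (t₀ + if b then ε else -ε)) ^ 2 / (2 * σ ^ 2)) := by
  rw [Fintype.sum_bool, if_pos rfl, if_neg Bool.false_ne_true, mul_add, ← Real.exp_add,
    ← Real.exp_add, ← add_div, ← add_div]
  have hσ : 0 ≤ 2 * σ ^ 2 := by positivity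
  obtain ⟨h₁, h₂⟩ := abs_le.mp h
  rcases le_total 0 (a - t₀) with ha | ha
  · refine le_add_of_le_of_nonneg (exp_le_exp.mpr (div_le_div_of_nonneg_right ?_ hσ)) (exp_pos _).le
    nlinarith [mul_le_mul_of_nonneg_left h₂ ha, sq_nonneg (t - t₀)]
  · refine le_add_of_nonneg_of_le (exp_pos _).le (exp_le_exp.mpr (div_le_div_of_nonneg_right ?_ hσ))
    nlinarith [mul_le_mul_of_nonpos_left h₁ ha, sq_nonneg (t - t₀)]

lemma gKer_le_sum_cubeCorner {x z z₀ : Fin d → ℝ} {ε : ℝ} (hz : z ∈ Metric.ball z₀ ε) :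
    gKer d σ x z ≤ exp (ε ^ 2 / (2 * σ ^ 2)) ^ d * ∑ s, gKer d σ x (cubeCorner z₀ ε s) := by
  have hcoord : ∀ i, |z i - z₀ i| ≤ ε := fun i =>
    (Real.dist_eq _ _ ▸ dist_le_pi_dist z z₀ i).trans (Metric.mem_ball.mp hz).le
  simp only [gKer_eq_mul_prod, ← Finset.mul_sum]
  rw [mul_left_comm]
  refine mul_le_mul_of_nonneg_left ?_ (by positivity)
  calc ∏ i, exp (-(x i - z i) ^ 2 / (2 * σ ^ 2))
      ≤ ∏ i, exp (ε ^ 2 / (2 * σ ^ 2)) *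
          ∑ b : Bool, exp (-(x i - (z₀ i + if b then ε else -ε)) ^ 2 / (2 * σ ^ 2)) :=
        Finset.prod_le_prod (fun i _ => (exp_pos _).le)
          fun i _ => exp_neg_sq_le_of_abs_le (hcoord i)
    _ = _ := by
        rw [Finset.prod_mul_distrib, Finset.prod_const, Finset.card_univ, Fintype.card_fin,
          Finset.prod_univ_sum]
        rfl
end gKer

section gaussConv
variable {σ : ℝ} {φ : (Fin d → ℝ) → ℝ}

def GaussIntegrable (d : ℕ) (σ : ℝ) (φ : (Fin d → ℝ) → ℝ) : Prop :=
  ∀ c, Integrable fun x => φ x * gKer d σ x c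

def gaussConv (d : ℕ) (σ : ℝ) (φ : (Fin d → ℝ) → ℝ) (z : Fin d → ℝ) : ℝ :=
  ∫ x, φ x * gKer d σ x z

def gaussPosteriorCov (d : ℕ) (σ : ℝ) (φ : (Fin d → ℝ) → ℝ) (z : Fin d → ℝ) :
    Matrix (Fin d) (Fin d) ℝ :=
  Matrix.of fun i j =>
    gaussConv d σ (fun x => x i * (x j * φ x)) z / gaussConv d σ φ z
      - gaussConv d σ (fun x => x i * φ x) z / gaussConv d σ φ z
        * (gaussConv d σ (fun x => x j * φ x) z / gaussConv d σ φ z)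

lemma GaussIntegrable.coord_mul {i : Fin d} (h0 : GaussIntegrable d σ φ)
    (h2 : GaussIntegrable d σ fun x => x i * (x i * φ x)) :
    GaussIntegrable d σ fun x => x i * φ x := by
  intro c
  refine ((h0 c).norm.add (h2 c).norm).mono' ?_ (ae_of_all _ fun x => ?_)
  · simpa only [mul_assoc] using
      (continuous_apply i).aestronglyMeasurable.fun_mul (h0 c).aestronglyMeasurable
  · simp only [Pi.add_apply, norm_mul, Real.norm_eq_abs]
    have hb : 0 ≤ |φ x| * |gKer d σ x c| := by positivity
    nlinarith [mul_nonneg hb (sq_nonneg (|x i| - 1)), mul_nonneg hb (abs_nonneg (x i))]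

lemma norm_gradient_gKer_le {z z₀ : Fin d → ℝ} (hz : z ∈ Metric.ball z₀ 1) (a : ℝ)
    (x : Fin d → ℝ) :
    ‖dotCLM fun i => (σ ^ 2)⁻¹ * ((x i - z i) * (a * gKer d σ x z))‖ ≤
      (σ ^ 2)⁻¹ * exp (1 ^ 2 / (2 * σ ^ 2)) ^ d * ∑ s, ∑ i,
        (‖x i * a * gKer d σ x (cubeCorner z₀ 1 s)‖
          + (|z₀ i| + 1) * ‖a * gKer d σ x (cubeCorner z₀ 1 s)‖) := by
  have habs : ∀ c, |gKer d σ x c| = gKer d σ x c := fun c => abs_of_nonneg (gKer_nonneg x c)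
  have hcoord : ∀ i, |x i - z i| ≤ |x i| + (|z₀ i| + 1) := fun i => by
    have := (Real.dist_eq _ _ ▸ dist_le_pi_dist z z₀ i).trans (Metric.mem_ball.mp hz).le
    have := abs_sub_abs_le_abs_sub (z i) (z₀ i)
    have := abs_sub (x i) (z i)
    linarith
  calc _ ≤ ∑ i, |(σ ^ 2)⁻¹ * ((x i - z i) * (a * gKer d σ x z))| := norm_dotCLM_le _
    _ ≤ ∑ i, (σ ^ 2)⁻¹ * ((|x i| + (|z₀ i| + 1)) *
          (|a| * (exp (1 ^ 2 / (2 * σ ^ 2)) ^ d * ∑ s, gKer d σ x (cubeCorner z₀ 1 s)))) := by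
        refine Finset.sum_le_sum fun i _ => ?_
        rw [abs_mul, abs_mul, abs_mul, abs_of_nonneg (by positivity : (0 : ℝ) ≤ (σ ^ 2)⁻¹), habs]
        have hK := mul_le_mul_of_nonneg_left (gKer_le_sum_cubeCorner (σ := σ) (x := x) hz)
          (abs_nonneg a)
        exact mul_le_mul_of_nonneg_left (mul_le_mul (hcoord i) hK
          (mul_nonneg (abs_nonneg a) (gKer_nonneg x z)) (by positivity)) (by positivity)
    _ = _ := by
        simp only [norm_mul, Real.norm_eq_abs, habs, Finset.mul_sum]
        rw [Finset.sum_comm]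
        exact Finset.sum_congr rfl fun s _ => Finset.sum_congr rfl fun i _ => by ring

lemma hasFDerivAt_gaussConv (h0 : GaussIntegrable d σ φ)
    (h1 : ∀ i, GaussIntegrable d σ fun x => x i * φ x) (z₀ : Fin d → ℝ) :
    HasFDerivAt (gaussConv d σ φ) (dotCLM fun i =>
      (σ ^ 2)⁻¹ * (gaussConv d σ (fun x => x i * φ x) z₀ - z₀ i * gaussConv d σ φ z₀)) z₀ := by
  have hgrad : ∀ z i, Integrable fun x => (σ ^ 2)⁻¹ * ((x i - z i) * (φ x * gKer d σ x z)) :=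
    fun z i => (((h1 i z).sub ((h0 z).const_mul (z i))).const_mul (σ ^ 2)⁻¹).congr
      (ae_of_all _ fun x => by simp only [Pi.sub_apply]; ring)
  have hderiv : (dotCLM fun i =>
      (σ ^ 2)⁻¹ * (gaussConv d σ (fun x => x i * φ x) z₀ - z₀ i * gaussConv d σ φ z₀)) =
      ∫ x, dotCLM fun i => (σ ^ 2)⁻¹ * ((x i - z₀ i) * (φ x * gKer d σ x z₀)) := by
    rw [integral_dotCLM (hgrad z₀)]
    congr 1
    funext i
    rw [integral_const_mul, gaussConv, gaussConv, ← integral_const_mul (z₀ i),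
      ← integral_sub (h1 i z₀) ((h0 z₀).const_mul _)]
    congr 1
    exact integral_congr_ae (ae_of_all _ fun x => by beta_reduce; ring)
  rw [hderiv]
  refine hasFDerivAt_integral_of_dominated_of_fderiv_le (Metric.ball_mem_nhds z₀ one_pos)
    (Filter.Eventually.of_forall fun z => (h0 z).aestronglyMeasurable) (h0 z₀)
    (integrable_dotCLM (hgrad z₀)).aestronglyMeasurable
    (ae_of_all _ fun x z hz => norm_gradient_gKer_le hz (φ x) x)
    (((integrable_finsetSum _ fun s _ => integrable_finsetSum _ fun i _ =>
      (h1 i _).norm.add ((h0 _).norm.const_mul _)).const_mul _))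
    (ae_of_all _ fun x z _ =>
      ((hasFDerivAt_gKer_right x z).const_mul (φ x)).congr_fderiv ?_)
  rw [dotCLM_smul]
  congr 1
  funext i
  simp only [Pi.smul_apply, smul_eq_mul]
  ring

end gaussConv

section logHessian
variable {σ : ℝ} {φ : (Fin d → ℝ) → ℝ} {C : ℝ}

lemma fderiv_log_gaussConv_div_apply_single (h0 : GaussIntegrable d σ φ)
    (h1 : ∀ i, GaussIntegrable d σ fun x => x i * φ x) (hpos : ∀ z, 0 < gaussConv d σ φ z)
    (hC : C ≠ 0) (z : Fin d → ℝ) (j : Fin d) :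
    fderiv ℝ (fun z => log (gaussConv d σ φ z / C)) z (Pi.single j 1) =
      (σ ^ 2)⁻¹ * (gaussConv d σ (fun x => x j * φ x) z / gaussConv d σ φ z - z j) := by
  have hlog : (fun z => log (gaussConv d σ φ z / C)) = fun z => log (gaussConv d σ φ z) - log C :=
    funext fun z => log_div (hpos z).ne' hC
  rw [hlog, (((hasFDerivAt_gaussConv h0 h1 z).log (hpos z).ne').sub_const _).fderiv,
    smul_apply, dotCLM_single, smul_eq_mul]
  field_simp [(hpos z).ne']

theorem hess'_log_gaussConv_div (h0 : GaussIntegrable d σ φ)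
    (h2 : ∀ i j, GaussIntegrable d σ fun x => x i * (x j * φ x))
    (hpos : ∀ z, 0 < gaussConv d σ φ z) (hC : C ≠ 0) (z₀ : Fin d → ℝ) :
    hess' (fun z => log (gaussConv d σ φ z / C)) z₀ =
      -((σ ^ 2)⁻¹ • (1 : Matrix (Fin d) (Fin d) ℝ)) + (σ ^ 4)⁻¹ • gaussPosteriorCov d σ φ z₀ := by
  have h1 : ∀ i, GaussIntegrable d σ fun x => x i * φ x := fun i => h0.coord_mul (h2 i i)
  ext i j
  have hgrad := funext (fderiv_log_gaussConv_div_apply_single h0 h1 hpos hC · j)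
  have hJ := hasFDerivAt_gaussConv h0 h1 z₀
  have hJinv := (hasDerivAt_inv (hpos z₀).ne').comp_hasFDerivAt z₀ hJ
  have hA := hasFDerivAt_gaussConv (h1 j) (fun i => h2 i j) z₀
  have hD : HasFDerivAt (fun z => (σ ^ 2)⁻¹ *
      (gaussConv d σ (fun x => x j * φ x) z / gaussConv d σ φ z - z j)) _ z₀ :=
    ((hA.mul hJinv).sub (hasFDerivAt_apply j z₀)).const_mul _
  simp only [hess', Matrix.of_apply]
  rw [hgrad, hD.fderiv]
  simp only [smul_apply, add_apply, sub_apply, dotCLM_single, smul_eq_mul,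
    ContinuousLinearMap.proj_apply, Matrix.add_apply, Matrix.neg_apply, Matrix.smul_apply,
    Matrix.one_apply, gaussPosteriorCov, Matrix.of_apply, Pi.single_apply, Function.comp_apply]
  rw [show (σ ^ 4)⁻¹ = ((σ ^ 2)⁻¹) ^ 2 by ring]
  simp only [@eq_comm _ j i]
  generalize (σ ^ 2)⁻¹ = s
  field_simp [(hpos z₀).ne']
  ring

end logHessian

lemma Fin.prod_update_last {M α : Type*} [CommMonoid M] {n : ℕ} (g : α → M)
    (y : Fin (n + 1) → α) (a : α) :
    ∏ k, g (Function.update y (Fin.last n) a k) = (∏ k : Fin n, g (y k.castSucc)) * g a := by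
  rw [Fin.prod_univ_castSucc, Function.update_self]
  congr 1
  exact Finset.prod_congr rfl fun k _ => by rw [Function.update_of_ne (Fin.castSucc_lt_last k).ne]

lemma integrable_mul_prod_gKer {σ : ℝ} {p : (Fin d → ℝ) → ℝ} (hp : Integrable p) {n : ℕ}
    (y : Fin n → Fin d → ℝ) : Integrable fun x => p x * ∏ k, gKer d σ x (y k) := by
  refine hp.mul_bdd (c := ((2 * π * σ ^ 2) ^ (-(d : ℝ) / 2)) ^ n)
    (continuous_finsetProd _ fun k _ => continuous_gKer_left (y k)).aestronglyMeasurable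
    (ae_of_all _ fun x => ?_)
  rw [Real.norm_eq_abs, Finset.abs_prod]
  calc ∏ k, |gKer d σ x (y k)| ≤ ∏ _k : Fin n, (2 * π * σ ^ 2) ^ (-(d : ℝ) / 2) :=
        Finset.prod_le_prod (fun k _ => abs_nonneg _) fun k _ =>
          (abs_of_nonneg (gKer_nonneg x _)).trans_le (gKer_le x _)
    _ = _ := by rw [Finset.prod_const, Finset.card_univ, Fintype.card_fin]

end GaussianSmoothing

/-- The paper's `m` measurements are `m + 1` here, `y (Fin.last m)` being the newest one. -/
theorem stmt10_general (d m : ℕ) (σ : ℝ) (p : (Fin d → ℝ) → ℝ)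
    (hpi : Integrable p)
    (hpos : ∀ (n : ℕ) (y : Fin n → Fin d → ℝ), 0 < jointD p σ n y)
    (hmom2 : ∀ (n : ℕ) (y : Fin n → Fin d → ℝ) (i j : Fin d),
      Integrable fun x => x i * x j * (p x * ∏ k, gKer d σ x (y k)))
    (y : Fin (m + 1) → Fin d → ℝ) :
    hess' (fun z =>
        Real.log (jointD p σ (m + 1) (Function.update y (Fin.last m) z)
          / jointD p σ m (fun k => y k.castSucc)))
      (y (Fin.last m))
      = -((σ ^ 2)⁻¹ • (1 : Matrix (Fin d) (Fin d) ℝ))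
          + (σ ^ 4)⁻¹ • postCovM p σ (m + 1) y := by
  set Q : (Fin d → ℝ) → ℝ := fun x => p x * ∏ k : Fin m, gKer d σ x (y k.castSucc)
  have hQ : ∀ z x,
      p x * ∏ k, gKer d σ x (Function.update y (Fin.last m) z k) = Q x * gKer d σ x z :=
    fun z x => by rw [Fin.prod_update_last, mul_assoc]
  have hjoint : ∀ z, jointD p σ (m + 1) (Function.update y (Fin.last m) z) = gaussConv d σ Q z :=
    fun z => by simp only [jointD, gaussConv, hQ]
  have h0 : GaussIntegrable d σ Q := fun z => by
    simpa only [hQ] using integrable_mul_prod_gKer (σ := σ) hpi (Function.update y (Fin.last m) z)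
  have h2 : ∀ i j, GaussIntegrable d σ fun x => x i * (x j * Q x) := fun i j z => by
    simpa only [hQ, mul_assoc] using hmom2 _ (Function.update y (Fin.last m) z) i j
  have hcov : postCovM p σ (m + 1) y = gaussPosteriorCov d σ Q (y (Fin.last m)) := by
    conv_lhs => rw [← Function.update_eq_self (Fin.last m) y]
    simp only [postCovM, gaussPosteriorCov, jointD, gaussConv, hQ, mul_assoc]
  simp only [hjoint, hcov]
  exact hess'_log_gaussConv_div h0 h2 (fun z => hjoint z ▸ hpos _ _) (hpos m _).ne' _

/-- For every `m ≥ 1` (here `m + 1` measurements),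
`∇²_{y_m} log p(y_m | y_{1:m−1}) = −σ⁻²I + σ⁻⁴ cov(X | y_{1:m})`. -/
theorem stmt10 (d m : ℕ) (σ : ℝ) (hσ : 0 < σ) (p : (Fin d → ℝ) → ℝ)
    (hp0 : ∀ x, 0 ≤ p x) (hpi : Integrable p) (hp1 : ∫ x, p x = 1)
    (hpos : ∀ (n : ℕ) (y : Fin n → Fin d → ℝ), 0 < jointD p σ n y)
    (hmom2 : ∀ (n : ℕ) (y : Fin n → Fin d → ℝ) (i j : Fin d),
      Integrable fun x => x i * x j * (p x * ∏ k, gKer d σ x (y k)))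
    (y : Fin (m + 1) → Fin d → ℝ) :
    hess' (fun z =>
        Real.log (jointD p σ (m + 1) (Function.update y (Fin.last m) z)
          / jointD p σ m (fun k => y k.castSucc)))
      (y (Fin.last m))
      = -((σ ^ 2)⁻¹ • (1 : Matrix (Fin d) (Fin d) ℝ))
          + (σ ^ 4)⁻¹ • postCovM p σ (m + 1) y :=
  stmt10_general d m σ p hpi hpos hmom2 y

end
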